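/- For all p, q, r, s ∈ ℂ, every nonzero t ∈ ℂ, and every permutation π of the 4-tuple (p,q,r,s): if L and L′ are complex Lie algebras admitting bases realizing the bracket patterns d₂₀(p,q,r,s) and d₂₀(t·π(p,q,r,s)) respectively, then L and L′ are isomorphic as Lie algebras over ℂ. (Thus the family d₂₀ is parameterized by the projective orbifold ℙ³/Σ₄, where Σ₄ permutes the projective coordinates.) -/

import Mathlib

/-- `Realizes L c` means that the complex Lie algebra `L` admits a basis `e₁, …, e₅`
(indexed by `Fin 5`) in which the brackets of basis vectors are given by the
structure constants `c`, i.e. `⁅eᵢ, eⱼ⁆ = ∑ₖ c i j k • eₖ` for all `i < j`,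
all brackets of basis vectors being determined by these via antisymmetry. -/
def Realizes (L : Type) [LieRing L] [LieAlgebra ℂ L]
    (c : Fin 5 → Fin 5 → Fin 5 → ℂ) : Prop :=
  ∃ e : Module.Basis (Fin 5) ℂ L, ∀ i j : Fin 5, i < j →
    ⁅e i, e j⁆ = ∑ k, c i j k • e k

/-- The bracket pattern `d₂₀(v₀, v₁, v₂, v₃)`: `[e₁,e₅]=v₀·e₁`, `[e₂,e₅]=e₁+v₁·e₂`,
`[e₃,e₅]=e₂+v₂·e₃`, `[e₄,e₅]=e₃+v₃·e₄`, all other brackets zero. -/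
def d20 (v : Fin 4 → ℂ) : Fin 5 → Fin 5 → Fin 5 → ℂ := fun i j =>
  if i = 0 ∧ j = 4 then ![v 0, 0, 0, 0, 0]
  else if i = 1 ∧ j = 4 then ![1, v 1, 0, 0, 0]
  else if i = 2 ∧ j = 4 then ![0, 1, v 2, 0, 0]
  else if i = 3 ∧ j = 4 then ![0, 0, 1, v 3, 0]
  else 0


/-!
Let `D = ⁅·, t • e₅⁆`. In a `d₂₀(v)` basis, `D` preserves the abelian ideal `⟨e₁, …, e₄⟩`
and `(D - t vᵢ) eᵢ = t • eᵢ₋₁`, so `e₄` is a cyclic vector killed by `∏ᵢ (D - t vᵢ)`.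
Hence `e₄, D e₄, D² e₄, D³ e₄, t • e₅` is a basis in which the brackets are given by the
companion matrix of `∏ᵢ (X - t vᵢ)`. That polynomial is invariant under permuting the `vᵢ`,
so both algebras of the theorem have bases with the same structure constants.
(In the code the basis is indexed from `0`: `eᵢ` is `e (i - 1)`.)
-/

open Polynomial

def IsStructureBasis {L : Type} [LieRing L] [LieAlgebra ℂ L] (e : Module.Basis (Fin 5) ℂ L)
    (c : Fin 5 → Fin 5 → Fin 5 → ℂ) : Prop :=
  ∀ i j, i < j → ⁅e i, e j⁆ = ∑ k, c i j k • e k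

/-- `⁅·, e₅⁆` acts on `⟨e₁, …, e₄⟩` by the companion matrix of the monic quartic `P`. -/
def companionPattern (P : ℂ[X]) : Fin 5 → Fin 5 → Fin 5 → ℂ := fun i j =>
  if i = 0 ∧ j = 4 then ![0, 1, 0, 0, 0]
  else if i = 1 ∧ j = 4 then ![0, 0, 1, 0, 0]
  else if i = 2 ∧ j = 4 then ![0, 0, 0, 1, 0]
  else if i = 3 ∧ j = 4 then ![-P.coeff 0, -P.coeff 1, -P.coeff 2, -P.coeff 3, 0]
  else 0

section LieBasis

variable {R ι L L' : Type*} [CommRing R] [LieRing L] [LieAlgebra R L] [LieRing L']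
  [LieAlgebra R L']

theorem LinearMap.map_lie_of_basis [LinearOrder ι] (e : Module.Basis ι R L) (g : L →ₗ[R] L')
    (h : ∀ i j, i < j → ⁅g (e i), g (e j)⁆ = g ⁅e i, e j⁆) (x y : L) :
    ⁅g x, g y⁆ = g ⁅x, y⁆ := by
  have h' : ∀ i j, ⁅g (e i), g (e j)⁆ = g ⁅e i, e j⁆ := by
    intro i j
    rcases lt_trichotomy i j with hij | rfl | hji
    · exact h i j hij
    · simp
    · rw [← lie_skew, h j i hji, ← map_neg, lie_skew]
  have hB : ((LieModule.toEnd R L' L' : L' →ₗ[R] Module.End R L').compl₁₂ g g) =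
      (LieModule.toEnd R L L : L →ₗ[R] Module.End R L).compr₂ g :=
    e.ext fun i => e.ext fun j => by simpa using h' i j
  simpa using LinearMap.congr_fun₂ hB x y

theorem lie_eq_zero_of_mem_span {s : Set L} (hs : ∀ x ∈ s, ∀ y ∈ s, ⁅x, y⁆ = 0)
    {x y : L} (hx : x ∈ Submodule.span R s) (hy : y ∈ Submodule.span R s) : ⁅x, y⁆ = 0 := by
  induction hx using Submodule.span_induction with
  | mem x hx =>
    induction hy using Submodule.span_induction with
    | mem y hy => exact hs x hx y hy
    | zero => simp
    | add y z _ _ hy hz => simp [lie_add, hy, hz]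
    | smul a y _ hy => simp [lie_smul, hy]
  | zero => simp
  | add x z _ _ hx hz => simp [add_lie, hx, hz]
  | smul a x _ hx => simp [smul_lie, hx]

end LieBasis

theorem Realizes.nonempty_lieEquiv {L L' : Type} [LieRing L] [LieAlgebra ℂ L] [LieRing L']
    [LieAlgebra ℂ L'] {c : Fin 5 → Fin 5 → Fin 5 → ℂ} (hL : Realizes L c)
    (hL' : Realizes L' c) : Nonempty (L ≃ₗ⁅ℂ⁆ L') := by
  obtain ⟨e, he⟩ := hL
  obtain ⟨f, hf⟩ := hL'
  let g := e.equiv f (Equiv.refl _)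
  have hg : ∀ i, g (e i) = f i := fun i => e.equiv_apply i f _
  refine ⟨{ g with map_lie' := fun {x y} =>
    (g.toLinearMap.map_lie_of_basis e (fun i j hij => ?_) x y).symm }⟩
  simp [hg, he i j hij, hf i j hij]

theorem Module.End.pow_natDegree_apply_of_aeval_apply_eq_zero {R M : Type*} [CommRing R]
    [AddCommGroup M] [Module R M] {f : Module.End R M} {P : R[X]} (hP : P.Monic) {x : M}
    (h : aeval f P x = 0) :
    (f ^ P.natDegree) x = -∑ i ∈ Finset.range P.natDegree, P.coeff i • (f ^ i) x := by
  rw [aeval_eq_sum_range, Finset.sum_range_succ, hP.coeff_natDegree, one_smul,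
    LinearMap.add_apply, LinearMap.sum_apply] at h
  simpa only [LinearMap.smul_apply, eq_neg_iff_add_eq_zero, add_comm] using h

def cyclicFamily {R L : Type*} [Semiring R] [AddCommMonoid L] [Module R L] (D : Module.End R L)
    (x z : L) : Fin 5 → L :=
  ![x, D x, (D ^ 2) x, (D ^ 3) x, z]

section D20

variable {L : Type} [LieRing L] [LieAlgebra ℂ L] {v : Fin 4 → ℂ} {e : Module.Basis (Fin 5) ℂ L}
  {t : ℂ} {D : Module.End ℂ L}

theorem lie_basis_four_of_d20 (he : IsStructureBasis e (d20 v)) :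
    ⁅e 0, e 4⁆ = v 0 • e 0 ∧ ⁅e 1, e 4⁆ = e 0 + v 1 • e 1 ∧
      ⁅e 2, e 4⁆ = e 1 + v 2 • e 2 ∧ ⁅e 3, e 4⁆ = e 2 + v 3 • e 3 := by
  have h (i : Fin 5) (hi : i < 4) := he i 4 hi
  simp only [d20, Fin.sum_univ_five] at h
  exact ⟨by simpa using h 0 (by decide), by simpa using h 1 (by decide),
    by simpa using h 2 (by decide), by simpa using h 3 (by decide)⟩

theorem lie_eq_zero_of_mem_span_of_d20 (he : IsStructureBasis e (d20 v)) {x y : L}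
    (hx : x ∈ Submodule.span ℂ (e '' {4}ᶜ)) (hy : y ∈ Submodule.span ℂ (e '' {4}ᶜ)) :
    ⁅x, y⁆ = 0 := by
  refine lie_eq_zero_of_mem_span ?_ hx hy
  rintro _ ⟨i, hi, rfl⟩ _ ⟨j, hj, rfl⟩
  rcases lt_trichotomy i j with hij | rfl | hji
  · simpa [d20, show j ≠ 4 from hj] using he i j hij
  · exact lie_self _
  · rw [← lie_skew, neg_eq_zero]
    simpa [d20, show i ≠ 4 from hi] using he j i hji

theorem sub_algebraMap_apply_of_d20 (he : IsStructureBasis e (d20 v))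
    (hD : ∀ x, D x = ⁅x, t • e 4⁆) :
    (D - algebraMap ℂ _ (t * v 0)) (e 0) = 0 ∧
      (D - algebraMap ℂ _ (t * v 1)) (e 1) = t • e 0 ∧
      (D - algebraMap ℂ _ (t * v 2)) (e 2) = t • e 1 ∧
      (D - algebraMap ℂ _ (t * v 3)) (e 3) = t • e 2 := by
  obtain ⟨h0, h1, h2, h3⟩ := lie_basis_four_of_d20 he
  refine ⟨?_, ?_, ?_, ?_⟩ <;>
    simp only [LinearMap.sub_apply, Module.algebraMap_end_apply, hD, lie_smul, h0, h1, h2, h3] <;>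
    module

theorem aeval_prod_apply_of_d20 (he : IsStructureBasis e (d20 v))
    (hD : ∀ x, D x = ⁅x, t • e 4⁆) :
    aeval D (∏ i, (X - C (t * v i))) (e 3) = 0 := by
  obtain ⟨h0, h1, h2, h3⟩ := sub_algebraMap_apply_of_d20 he hD
  simp only [Fin.prod_univ_four, map_mul (aeval D), map_sub, aeval_X, aeval_C, Module.End.mul_apply]
  simp only [h3, map_smul, h2, h1, h0, smul_zero]

theorem pow_four_apply_of_d20 (he : IsStructureBasis e (d20 v))
    (hD : ∀ x, D x = ⁅x, t • e 4⁆) :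
    (D ^ 4) (e 3) =
      -∑ i : Fin 4, (∏ k, (X - C (t * v k))).coeff i • (D ^ (i : ℕ)) (e 3) := by
  have hP : (∏ k, (X - C (t * v k))).Monic := monic_prod_of_monic _ _ fun k _ => monic_X_sub_C _
  have hdeg : (∏ k, (X - C (t * v k))).natDegree = 4 := by
    rw [natDegree_finsetProd_X_sub_C_eq_card, Finset.card_univ, Fintype.card_fin]
  have := Module.End.pow_natDegree_apply_of_aeval_apply_eq_zero hP (aeval_prod_apply_of_d20 he hD)
  rwa [hdeg, Finset.sum_range] at this

theorem top_le_span_cyclicFamily_of_d20 (he : IsStructureBasis e (d20 v)) (ht : t ≠ 0)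
    (hD : ∀ x, D x = ⁅x, t • e 4⁆) :
    ⊤ ≤ Submodule.span ℂ (Set.range (cyclicFamily D (e 3) (t • e 4))) := by
  set W := Submodule.span ℂ (Set.range (cyclicFamily D (e 3) (t • e 4)))
  have hfW (i : Fin 5) : cyclicFamily D (e 3) (t • e 4) i ∈ W :=
    Submodule.subset_span ⟨i, rfl⟩
  have hpow (i : Fin 4) : (D ^ (i : ℕ)) (e 3) ∈ W := by
    fin_cases i
    · simpa [cyclicFamily] using hfW 0
    · simpa [cyclicFamily] using hfW 1
    · simpa [cyclicFamily] using hfW 2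
    · simpa [cyclicFamily] using hfW 3
  have hDW : W ≤ W.comap D := by
    rw [Submodule.span_le]
    rintro _ ⟨i, rfl⟩
    fin_cases i
    · simpa [cyclicFamily] using hfW 1
    · simpa [cyclicFamily, pow_two] using hfW 2
    · simpa [cyclicFamily, pow_succ'] using hfW 3
    · show D ((D ^ 3) (e 3)) ∈ W
      rw [← Module.End.mul_apply, ← pow_succ', pow_four_apply_of_d20 he hD]
      exact W.neg_mem (W.sum_mem fun i _ => W.smul_mem _ (hpow i))
    · simp [cyclicFamily, hD]
  have lower {x y : L} (c : ℂ) (hxy : (D - algebraMap ℂ _ c) x = t • y) (hx : x ∈ W) :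
      y ∈ W := by
    have := W.smul_mem t⁻¹ (W.sub_mem (hDW hx) (W.smul_mem c hx))
    rw [LinearMap.sub_apply, Module.algebraMap_end_apply] at hxy
    rwa [hxy, smul_smul, inv_mul_cancel₀ ht, one_smul] at this
  obtain ⟨-, h1, h2, h3⟩ := sub_algebraMap_apply_of_d20 he hD
  have he3 : e 3 ∈ W := hfW 0
  have he2 : e 2 ∈ W := lower _ h3 he3
  have he1 : e 1 ∈ W := lower _ h2 he2
  have he0 : e 0 ∈ W := lower _ h1 he1
  have he4 : e 4 ∈ W := by simpa [cyclicFamily, ht] using W.smul_mem t⁻¹ (hfW 4)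
  rw [← e.span_eq, Submodule.span_le]
  rintro _ ⟨i, rfl⟩
  fin_cases i <;> assumption

theorem cyclicFamily_mem_span_of_d20 (he : IsStructureBasis e (d20 v))
    (hD : ∀ x, D x = ⁅x, t • e 4⁆) {k : Fin 5} (hk : k ≠ 4) :
    cyclicFamily D (e 3) (t • e 4) k ∈ Submodule.span ℂ (e '' {4}ᶜ) := by
  set A := Submodule.span ℂ (e '' {4}ᶜ)
  have heA (i : Fin 5) (hi : i ≠ 4) : e i ∈ A := Submodule.subset_span ⟨i, hi, rfl⟩
  obtain ⟨h0, h1, h2, h3⟩ := lie_basis_four_of_d20 he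
  have hDe (i : Fin 5) (hi : i ≠ 4) : D (e i) ∈ A := by
    fin_cases i <;> simp only [Fin.reduceFinMk, Fin.isValue, hD, lie_smul, h0, h1, h2, h3] <;>
      first
      | exact absurd rfl hi
      | apply_rules [Submodule.add_mem, Submodule.smul_mem, heA] <;> decide
  have hDA : A ≤ A.comap D := Submodule.span_le.2 (by rintro _ ⟨i, hi, rfl⟩; exact hDe i hi)
  have hA (n : ℕ) : (D ^ n) (e 3) ∈ A :=
    Module.End.pow_apply_mem_of_forall_mem (p := A) n (fun _ hx => hDA hx) _ (heA 3 (by decide))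
  fin_cases k
  · simpa [cyclicFamily] using hA 0
  · simpa [cyclicFamily] using hA 1
  · simpa [cyclicFamily] using hA 2
  · simpa [cyclicFamily] using hA 3
  · exact absurd rfl hk

theorem lie_cyclicFamily_of_d20 (he : IsStructureBasis e (d20 v))
    (hD : ∀ x, D x = ⁅x, t • e 4⁆) (i j : Fin 5) (hij : i < j) :
    ⁅cyclicFamily D (e 3) (t • e 4) i, cyclicFamily D (e 3) (t • e 4) j⁆ =
      ∑ k, companionPattern (∏ k, (X - C (t * v k))) i j k •
        cyclicFamily D (e 3) (t • e 4) k := by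
  rcases eq_or_ne j 4 with rfl | hj
  · rw [show cyclicFamily D (e 3) (t • e 4) 4 = t • e 4 from rfl, ← hD]
    have h4 := pow_four_apply_of_d20 he hD
    generalize ∏ k, (X - C (t * v k)) = P at h4 ⊢
    simp only [pow_succ', Module.End.mul_apply, pow_zero, Module.End.one_apply] at h4
    fin_cases i <;>
      simp [cyclicFamily, companionPattern, Fin.sum_univ_five, Fin.sum_univ_four, pow_succ', h4]
        at hij ⊢
    abel
  · rw [lie_eq_zero_of_mem_span_of_d20 he
      (cyclicFamily_mem_span_of_d20 he hD (hij.trans_le (Fin.le_last j)).ne)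
      (cyclicFamily_mem_span_of_d20 he hD hj)]
    simp [companionPattern, hj]

theorem Realizes.companionPattern_of_d20 (ht : t ≠ 0) (h : Realizes L (d20 v)) :
    Realizes L (companionPattern (∏ k, (X - C (t * v k)))) := by
  obtain ⟨e, he⟩ := h
  have hD (x : L) : (-LieAlgebra.ad ℂ L (t • e 4)) x = ⁅x, t • e 4⁆ := by
    rw [LinearMap.neg_apply, LieAlgebra.ad_apply, lie_skew]
  refine ⟨basisOfTopLeSpanOfCardEqFinrank _ (top_le_span_cyclicFamily_of_d20 he ht hD)
    (Module.finrank_eq_card_basis e).symm, fun i j hij => ?_⟩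
  simpa only [coe_basisOfTopLeSpanOfCardEqFinrank] using lie_cyclicFamily_of_d20 he hD i j hij

end D20

/-- For any parameters `p, q, r, s`, any nonzero scalar `t` and any permutation
`π` of the 4-tuple, Lie algebras realizing the patterns `d₂₀(p,q,r,s)` and
`d₂₀(t·π(p,q,r,s))` are isomorphic: the family `d₂₀` is parameterized by `ℙ³/Σ₄`. -/
theorem d20_projective_orbifold (p q r s t : ℂ) (ht : t ≠ 0) (π : Equiv.Perm (Fin 4))
    (L L' : Type) [LieRing L] [LieAlgebra ℂ L] [LieRing L'] [LieAlgebra ℂ L']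
    (hL : Realizes L (d20 ![p, q, r, s]))
    (hL' : Realizes L' (d20 (t • (![p, q, r, s] ∘ π)))) :
    Nonempty (L ≃ₗ⁅ℂ⁆ L') := by
  have hprod : ∏ k, (X - C (1 * (t • (![p, q, r, s] ∘ π)) k)) =
      ∏ k, (X - C (t * ![p, q, r, s] k)) := by
    simpa using Equiv.prod_comp π (fun k => X - C (t * ![p, q, r, s] k))
  have h' := hL'.companionPattern_of_d20 one_ne_zero
  rw [hprod] at h'
  exact (hL.companionPattern_of_d20 ht).nonempty_lieEquiv h'
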